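/- arXiv:1604.08000 — 2 statements merged into one kernel-verified Lean document; each statement's English description precedes it below -/
import Mathlib

section
/- Let p be an odd prime and let c, M be positive integers with gcd(p, cM) = 1. Let r, n be integers. Then the average of twisted Kloosterman sums over all Dirichlet characters ψ modulo p satisfies the exact identity ∑_{ψ mod p} (1 − ψ(−1)) · S_ψ(r, n; c·p·M) = (p − 1) · S(p̄·r, p̄·n; c·M) · ( e_p( q̄·(r+n) ) − e_p( −q̄·(r+n) ) ), where p̄ denotes an integer inverse of p modulo cM and q̄ denotes an integer inverse of cM modulo p. -/
open Complex

/-- `eAdd q x = exp(2πi x / q)`. -/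
noncomputable def eAdd (q : ℕ) (x : ℤ) : ℂ :=
  Complex.exp (2 * Real.pi * Complex.I * x / q)

/-- The Kloosterman sum `S(m, n; q) = ∑_{x mod q, (x,q)=1} e_q(m x + n x*)`. -/
noncomputable def klo (m n : ℤ) (q : ℕ) [NeZero q] : ℂ :=
  ∑ x : (ZMod q)ˣ,
    eAdd q (m * ((x : ZMod q).val : ℤ) + n * (((x⁻¹ : (ZMod q)ˣ) : ZMod q).val : ℤ))

/-- The twisted Kloosterman sum `S_ψ(m, n; q)` for a Dirichlet character `ψ` mod `d`, `d ∣ q`. -/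
noncomputable def kloTwist {d : ℕ} (ψ : DirichletCharacter ℂ d) (m n : ℤ) (q : ℕ)
    [NeZero q] (h : d ∣ q) : ℂ :=
  ∑ x : (ZMod q)ˣ,
    ψ (ZMod.castHom h (ZMod d) (x : ZMod q)) *
      eAdd q (m * ((x : ZMod q).val : ℤ) + n * (((x⁻¹ : (ZMod q)ˣ) : ZMod q).val : ℤ))

/-! The Chinese remainder theorem splits a unit mod `p · cM` into its residues mod `p` and mod
`cM`, and `e_{p·cM}(y) = e_p(q̄ y) · e_{cM}(p̄ y)`, so the twisted Kloosterman sum factors as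
`S_ψ(q̄ r, q̄ n; p) · S(p̄ r, p̄ n; cM)`. Since `(1 - ψ(-1)) ψ(x) = ψ(x) - ψ(-x)`, orthogonality of
the characters mod `p` keeps only `x = 1` and `x = -1` in the average, each with weight
`φ(p) = p - 1`. -/

lemma eAdd_eq_stdAddChar (q : ℕ) [NeZero q] (x : ℤ) : eAdd q x = ZMod.stdAddChar (x : ZMod q) :=
  (ZMod.stdAddChar_coe x).symm

lemma eAdd_congr {q : ℕ} [NeZero q] {x y : ℤ} (h : (x : ZMod q) = y) : eAdd q x = eAdd q y := by
  rw [eAdd_eq_stdAddChar, eAdd_eq_stdAddChar, h]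

lemma eAdd_add (q : ℕ) (x y : ℤ) : eAdd q (x + y) = eAdd q x * eAdd q y := by
  rw [eAdd, eAdd, eAdd, ← Complex.exp_add]
  congr 1
  push_cast
  ring

lemma eAdd_mul_mul_cancel {k : ℕ} (hk : k ≠ 0) (q : ℕ) (x : ℤ) :
    eAdd (q * k) (k * x) = eAdd q x := by
  have hk' : (k : ℂ) ≠ 0 := Nat.cast_ne_zero.mpr hk
  rw [eAdd, eAdd]
  congr 1
  push_cast
  field_simp

lemma eAdd_mul_of_inverses {a b : ℕ} [NeZero a] [NeZero b] {abar bbar : ℤ}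
    (habar : ((a * abar : ℤ) : ZMod b) = 1) (hbbar : ((b * bbar : ℤ) : ZMod a) = 1) (y : ℤ) :
    eAdd (a * b) y = eAdd a (bbar * y) * eAdd b (abar * y) := by
  -- `b * bbar + a * abar ≡ 1 [ZMOD a * b]` since `a * b ∣ (b * bbar - 1) * (a * abar - 1)`.
  have hdvd : ((a * b : ℕ) : ℤ) ∣ (b * bbar - 1) * (a * abar - 1) := by
    rw [Nat.cast_mul]
    refine mul_dvd_mul ?_ ?_
    · rw [← ZMod.intCast_zmod_eq_zero_iff_dvd, Int.cast_sub, hbbar, Int.cast_one, sub_self]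
    · rw [← ZMod.intCast_zmod_eq_zero_iff_dvd, Int.cast_sub, habar, Int.cast_one, sub_self]
  have hprod := (ZMod.intCast_zmod_eq_zero_iff_dvd _ (a * b)).2 hdvd
  have hab : ((a : ZMod (a * b)) * b) = 0 := by rw [← Nat.cast_mul, ZMod.natCast_self]
  rw [← eAdd_mul_mul_cancel (NeZero.ne b) a, ← eAdd_mul_mul_cancel (NeZero.ne a) b,
    mul_comm b a, ← eAdd_add]
  refine eAdd_congr ?_
  push_cast at hprod ⊢
  linear_combination y * hprod - y * abar * bbar * hab

theorem ZMod.sum_units_mul_of_coprime {R : Type*} [CommSemiring R] {a b : ℕ} [NeZero a]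
    [NeZero b] (hab : a.Coprime b) (f : (ZMod a)ˣ → R) (g : (ZMod b)ˣ → R) :
    ∑ x : (ZMod (a * b))ˣ,
        f (ZMod.unitsMap (dvd_mul_right a b) x) * g (ZMod.unitsMap (dvd_mul_left b a) x) =
      (∑ u, f u) * ∑ v, g v := by
  let E := (Units.mapEquiv (ZMod.chineseRemainder hab).toMulEquiv).trans MulEquiv.prodUnits
  have hE : ∀ x,
      E x = (ZMod.unitsMap (dvd_mul_right a b) x, ZMod.unitsMap (dvd_mul_left b a) x) := by
    intro x
    ext
    · exact RingHom.congr_fun (RingHom.ext_zmod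
        ((RingHom.fst _ _).comp (ZMod.chineseRemainder hab).toRingHom)
        (ZMod.castHom (dvd_mul_right a b) _)) x
    · exact RingHom.congr_fun (RingHom.ext_zmod
        ((RingHom.snd _ _).comp (ZMod.chineseRemainder hab).toRingHom)
        (ZMod.castHom (dvd_mul_left b a) _)) x
  rw [Finset.sum_mul_sum, ← Fintype.sum_prod_type']
  exact Fintype.sum_equiv E.toEquiv _ _ fun x => by
    rw [MulEquiv.toEquiv_eq_coe, MulEquiv.coe_toEquiv, hE]

lemma intCast_mul_val_add_mul_val_inv {a N : ℕ} [NeZero N] (h : a ∣ N) (m n : ℤ)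
    (x : (ZMod N)ˣ) :
    ((m * (x : ZMod N).val + n * ((x⁻¹ : (ZMod N)ˣ) : ZMod N).val : ℤ) : ZMod a) =
      m * ZMod.unitsMap h x + n * ↑(ZMod.unitsMap h x)⁻¹ := by
  push_cast
  rw [ZMod.natCast_val, ZMod.natCast_val, ← ZMod.unitsMap_val h, ← ZMod.unitsMap_val h, map_inv]

theorem kloTwist_mul_of_coprime {a b : ℕ} [NeZero a] [NeZero b] (hab : a.Coprime b)
    (ψ : DirichletCharacter ℂ a) (m n abar bbar : ℤ) (habar : ((a * abar : ℤ) : ZMod b) = 1)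
    (hbbar : ((b * bbar : ℤ) : ZMod a) = 1) :
    kloTwist ψ m n (a * b) (dvd_mul_right a b) =
      kloTwist ψ (bbar * m) (bbar * n) a dvd_rfl * klo (abar * m) (abar * n) b := by
  rw [kloTwist, kloTwist, klo, ← ZMod.sum_units_mul_of_coprime hab]
  refine Finset.sum_congr rfl fun x _ => ?_
  rw [eAdd_mul_of_inverses habar hbbar, mul_assoc]
  congr 2
  · rw [ZMod.castHom_self, RingHom.id_apply, ZMod.unitsMap_val, ZMod.castHom_apply]
  · refine eAdd_congr ?_
    rw [Int.cast_mul, intCast_mul_val_add_mul_val_inv (dvd_mul_right a b),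
      intCast_mul_val_add_mul_val_inv dvd_rfl, ZMod.unitsMap_self, MonoidHom.id_apply]
    push_cast
    ring
  · refine eAdd_congr ?_
    rw [Int.cast_mul, intCast_mul_val_add_mul_val_inv (dvd_mul_left b a),
      intCast_mul_val_add_mul_val_inv dvd_rfl, ZMod.unitsMap_self, MonoidHom.id_apply]
    push_cast
    ring

lemma kloTwist_self (d : ℕ) [NeZero d] (ψ : DirichletCharacter ℂ d) (m n : ℤ) :
    kloTwist ψ m n d dvd_rfl =
      ∑ x : (ZMod d)ˣ,
        ψ x * eAdd d (m * (x : ZMod d).val + n * ((x⁻¹ : (ZMod d)ˣ) : ZMod d).val) := by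
  simp only [kloTwist, ZMod.castHom_self, RingHom.id_apply]

theorem sum_one_sub_apply_neg_one_mul_kloTwist (d : ℕ) [NeZero d] (m n : ℤ) :
    ∑ ψ : DirichletCharacter ℂ d, (1 - ψ (-1)) * kloTwist ψ m n d dvd_rfl =
      d.totient * (eAdd d (m + n) - eAdd d (-(m + n))) := by
  set e : (ZMod d)ˣ → ℂ := fun x =>
    eAdd d (m * (x : ZMod d).val + n * ((x⁻¹ : (ZMod d)ˣ) : ZMod d).val)
  have he_one : e 1 = eAdd d (m + n) := eAdd_congr (by
    rw [intCast_mul_val_add_mul_val_inv dvd_rfl, ZMod.unitsMap_self, MonoidHom.id_apply, inv_one,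
      Units.val_one]
    push_cast
    ring)
  have he_neg_one : e (-1) = eAdd d (-(m + n)) := eAdd_congr (by
    rw [intCast_mul_val_add_mul_val_inv dvd_rfl, ZMod.unitsMap_self, MonoidHom.id_apply,
      inv_neg_one, Units.val_neg, Units.val_one]
    push_cast
    ring)
  have horth : ∀ x : (ZMod d)ˣ, ∑ ψ : DirichletCharacter ℂ d, ψ x =
      if x = 1 then (d.totient : ℂ) else 0 := fun x => by
    simp only [DirichletCharacter.sum_characters_eq, Units.val_eq_one]
  calc ∑ ψ : DirichletCharacter ℂ d, (1 - ψ (-1)) * kloTwist ψ m n d dvd_rfl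
      = ∑ x : (ZMod d)ˣ, (∑ ψ : DirichletCharacter ℂ d, ψ x) * e x -
          ∑ x : (ZMod d)ˣ, (∑ ψ : DirichletCharacter ℂ d, ψ ↑(-x)) * e x := by
        simp only [kloTwist_self, Finset.mul_sum, Finset.sum_mul, ← Finset.sum_sub_distrib]
        rw [Finset.sum_comm]
        refine Finset.sum_congr rfl fun x _ => Finset.sum_congr rfl fun ψ _ => ?_
        have hneg : ψ (-(x : ZMod d)) = ψ (-1) * ψ x := by rw [← map_mul, neg_one_mul]
        rw [Units.val_neg, hneg]
        ring
    _ = ∑ x : (ZMod d)ˣ, (∑ ψ : DirichletCharacter ℂ d, ψ x) * (e x - e (-x)) := by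
        rw [← Fintype.sum_equiv (Equiv.neg (ZMod d)ˣ)
          (fun x => (∑ ψ : DirichletCharacter ℂ d, ψ x) * e (-x))
          (fun x => (∑ ψ : DirichletCharacter ℂ d, ψ ↑(-x)) * e x) fun x => by simp,
          ← Finset.sum_sub_distrib]
        simp only [mul_sub]
    _ = d.totient * (eAdd d (m + n) - eAdd d (-(m + n))) := by
        simp only [horth, ite_mul, zero_mul, Finset.sum_ite_eq', Finset.mem_univ, if_true,
          he_one, he_neg_one]

lemma kloTwist_congr_modulus {d q q' : ℕ} [NeZero q] [NeZero q'] (ψ : DirichletCharacter ℂ d)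
    (m n : ℤ) (hq : q = q') (h : d ∣ q) :
    kloTwist ψ m n q h = kloTwist ψ m n q' (hq ▸ h) := by
  subst hq
  rfl

/-- Averaging twisted Kloosterman sums over all Dirichlet characters mod an odd prime `p`. -/
theorem stmt_0 (p : ℕ) [hp : Fact p.Prime]
    (c M : ℕ) [NeZero c] [NeZero M] (hcop : Nat.gcd p (c * M) = 1) (r n : ℤ)
    (pbar : ℤ) (hpbar : (((p : ℤ) * pbar : ℤ) : ZMod (c * M)) = 1)
    (qbar : ℤ) (hqbar : ((((c * M : ℕ) : ℤ) * qbar : ℤ) : ZMod p) = 1) :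
    ∑ ψ : DirichletCharacter ℂ p,
        (1 - ψ (-1)) * kloTwist ψ r n (c * p * M) ⟨c * M, by ring⟩ =
      ((p : ℂ) - 1) * klo (pbar * r) (pbar * n) (c * M) *
        (eAdd p (qbar * (r + n)) - eAdd p (-(qbar * (r + n)))) := by
  calc ∑ ψ : DirichletCharacter ℂ p,
        (1 - ψ (-1)) * kloTwist ψ r n (c * p * M) ⟨c * M, by ring⟩
      = ∑ ψ : DirichletCharacter ℂ p, (1 - ψ (-1)) *
          (kloTwist ψ (qbar * r) (qbar * n) p dvd_rfl * klo (pbar * r) (pbar * n) (c * M)) := by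
        refine Finset.sum_congr rfl fun ψ _ => ?_
        rw [kloTwist_congr_modulus ψ r n (by ring : c * p * M = p * (c * M)),
          kloTwist_mul_of_coprime hcop ψ r n pbar qbar hpbar hqbar]
    _ = _ := by
        simp only [← mul_assoc, ← Finset.sum_mul, sum_one_sub_apply_neg_one_mul_kloTwist,
          Nat.totient_prime hp.out, Nat.cast_sub hp.out.one_le, Nat.cast_one, mul_add]
        ring
end

section
/- Let M and k be positive integers with k > 1 and set q = k·M. Let χ be a Dirichlet character modulo M, let d be a positive integer with d | q, and let ψ be a Dirichlet character modulo d. Then for every integer n, ∑_{a mod q} χ(a) · S_ψ(a, n; q) = 0. -/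
open Complex

lemma kloTwist_eq_sum_stdAddChar {d : ℕ} (ψ : DirichletCharacter ℂ d) (m n : ℤ) (q : ℕ)
    [NeZero q] (h : d ∣ q) :
    kloTwist ψ m n q h = ∑ x : (ZMod q)ˣ, ψ (ZMod.castHom h (ZMod d) x) *
      (ZMod.stdAddChar ((m : ZMod q) * (x : ZMod q)) *
        ZMod.stdAddChar ((n : ZMod q) * ((x⁻¹ : (ZMod q)ˣ) : ZMod q))) := by
  simp only [kloTwist, eAdd_eq_stdAddChar, ← AddChar.map_add_eq_mul]
  push_cast
  simp only [ZMod.natCast_val, ZMod.cast_id', id]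

theorem AddChar.sum_mul_eq_zero_of_periodic {G R : Type*} [AddCommGroup G] [Fintype G]
    [CommRing R] [NoZeroDivisors R] (ψ : AddChar G R) (f : G → R) {g : G}
    (hf : ∀ a, f (a + g) = f a) (hψ : ψ g ≠ 1) : ∑ a, f a * ψ a = 0 := by
  have hshift : ∑ a, f a * ψ a = ψ g * ∑ a, f a * ψ a := by
    rw [Finset.mul_sum, ← Fintype.sum_equiv (Equiv.addRight g) _ _ fun _ => rfl]
    simp only [Equiv.coe_addRight, hf, AddChar.map_add_eq_mul]
    exact Finset.sum_congr rfl fun _ _ => by ring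
  have : (1 - ψ g) * ∑ a, f a * ψ a = 0 := by rw [sub_mul, one_mul, ← hshift, sub_self]
  exact (mul_eq_zero.mp this).resolve_left (sub_ne_zero.mpr hψ.symm)

lemma DirichletCharacter.sum_mul_stdAddChar_eq_zero {M N : ℕ} [NeZero N] (hMN : M ∣ N)
    (χ : DirichletCharacter ℂ M) {y : ZMod N} (hy : (M : ZMod N) * y ≠ 0) :
    ∑ a : ZMod N, χ (ZMod.castHom hMN (ZMod M) a) * ZMod.stdAddChar (a * y) = 0 := by
  have hperiod (a : ZMod N) : χ (ZMod.castHom hMN (ZMod M) (a + M)) =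
      χ (ZMod.castHom hMN (ZMod M) a) := by
    rw [map_add, map_natCast, ZMod.natCast_self, add_zero]
  have hchar : ZMod.stdAddChar.mulShift y (M : ZMod N) ≠ 1 := by
    rw [AddChar.mulShift_apply, mul_comm, ← (ZMod.stdAddChar (N := N)).map_zero_eq_one]
    exact ZMod.injective_stdAddChar.ne hy
  simpa only [AddChar.mulShift_apply, mul_comm y] using
    (ZMod.stdAddChar.mulShift y).sum_mul_eq_zero_of_periodic _ hperiod hchar

/-- Vanishing of the complete character sum `∑_{a mod q} χ(a) S_ψ(a, n; q)` for `q = kM`, `k > 1`. -/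
theorem stmt_11 (M k : ℕ) [NeZero M] [NeZero k] (hk : 1 < k)
    (χ : DirichletCharacter ℂ M) (d : ℕ) (hd : d ∣ k * M) (ψ : DirichletCharacter ℂ d)
    (n : ℤ) :
    ∑ a : ZMod (k * M),
      χ (ZMod.castHom (dvd_mul_left M k) (ZMod M) a) *
        kloTwist ψ (a.val : ℤ) n (k * M) hd = 0 := by
  have hM : (M : ZMod (k * M)) ≠ 0 := by
    rw [Ne, ZMod.natCast_eq_zero_iff]
    exact fun h => by nlinarith [Nat.le_of_dvd (NeZero.pos M) h, NeZero.pos M]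
  simp only [kloTwist_eq_sum_stdAddChar, Int.cast_natCast, ZMod.natCast_zmod_val,
    Finset.mul_sum]
  rw [Finset.sum_comm]
  refine Finset.sum_eq_zero fun x _ => ?_
  have hinner := χ.sum_mul_stdAddChar_eq_zero (dvd_mul_left M k)
    (y := (x : ZMod (k * M))) (by rwa [Ne, x.mul_left_eq_zero])
  rw [← mul_zero (ψ (ZMod.castHom hd (ZMod d) x) *
    ZMod.stdAddChar ((n : ZMod (k * M)) * ((x⁻¹ : (ZMod (k * M))ˣ) : ZMod (k * M)))),
    ← hinner, Finset.mul_sum]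
  exact Finset.sum_congr rfl fun a _ => by ring
end
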